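/- Suppose k ≥ 1 and e > max(1, max{j + ν_2(j) : 0 < j < k}). Then ν_2(f(2^e - k - 1)) = k + ν_2(k) - e, where f(n) = ∑_{i=0}^{n} C(n,i)^{-1}. -/

import Mathlib

def f (n : ℕ) : ℚ := ∑ k ∈ Finset.range (n + 1), ((n.choose k : ℚ))⁻¹

/-!
The recurrence `f (n + 1) = (n + 2) / (2 (n + 1)) f n + 1` gives the closed form
`f n = (n + 1) / 2 ^ (n + 1) * ∑_{j=1}^{n+1} 2 ^ j / j`, so with `N = 2 ^ e` everything reduces
to the 2-adic valuation of `∑_{j=1}^{N-k} 2 ^ j / j`. This is the full sum up to `N` minus its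
last `k` terms. The full sum has valuation `> N - e`, because `f (N - 1)` is twice a sum of
reciprocals of the odd binomial coefficients `C(N - 1, i)`. Among the last `k` terms, `2 ^ N / N`
has valuation `N - e`, while for `0 < i < k` the term `2 ^ (N - i) / (N - i)` has valuation
`N - i - ν₂(i) > N - e` by the hypothesis on `e`. Hence the partial sum has valuation exactly
`N - e`, and `ν₂(N - k) = ν₂(k)` finishes.
-/

open Finset

lemma inv_choose_add_inv_choose_succ {n i : ℕ} (hi : i ≤ n) :
    ((n + 1).choose i : ℚ)⁻¹ + ((n + 1).choose (i + 1) : ℚ)⁻¹ =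
      (n + 2) / ((n + 1) * n.choose i) := by
  have hlow := congrArg (Nat.cast : ℕ → ℚ) (Nat.choose_mul_succ_eq n i)
  have hhigh := congrArg (Nat.cast : ℕ → ℚ) (Nat.add_one_mul_choose_eq n i)
  push_cast [Nat.cast_sub (by omega : i ≤ n + 1)] at hlow hhigh
  have : (0 : ℚ) < n.choose i := by exact_mod_cast Nat.choose_pos hi
  have : (0 : ℚ) < (n + 1).choose i := by exact_mod_cast Nat.choose_pos (by omega)
  have : (0 : ℚ) < (n + 1).choose (i + 1) := by exact_mod_cast Nat.choose_pos (by omega)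
  field_simp
  linear_combination ((n + 1).choose (i + 1) : ℚ) * hlow + ((n + 1).choose i : ℚ) * hhigh

lemma f_succ (n : ℕ) : f (n + 1) = (n + 2) / (2 * (n + 1)) * f n + 1 := by
  have hlow : f (n + 1) = ∑ i ∈ range (n + 1), ((n + 1).choose i : ℚ)⁻¹ + 1 := by
    rw [f, sum_range_succ]; simp
  have hhigh : f (n + 1) = ∑ i ∈ range (n + 1), ((n + 1).choose (i + 1) : ℚ)⁻¹ + 1 := by
    rw [f, sum_range_succ']; simp
  have hpair : 2 * f (n + 1) - 2 = (n + 2) / (n + 1) * f n := by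
    calc 2 * f (n + 1) - 2
        = ∑ i ∈ range (n + 1),
            (((n + 1).choose i : ℚ)⁻¹ + ((n + 1).choose (i + 1) : ℚ)⁻¹) := by
          rw [sum_add_distrib]; linarith
      _ = ∑ i ∈ range (n + 1), (n + 2) / (n + 1) * (n.choose i : ℚ)⁻¹ := by
          refine sum_congr rfl fun i hi => ?_
          rw [inv_choose_add_inv_choose_succ (Nat.lt_succ_iff.mp (mem_range.mp hi)), ← div_div,
            div_eq_mul_inv]
      _ = (n + 2) / (n + 1) * f n := by rw [f, mul_sum]
  have : ((n : ℚ) + 1) ≠ 0 := by positivity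
  rw [show f (n + 1) = ((n + 2) / (n + 1) * f n + 2) / 2 by linarith]
  field_simp

def twoPowDiv (i : ℕ) : ℚ := 2 ^ (i + 1) / (i + 1)

def twoPowDivSum (m : ℕ) : ℚ := ∑ i ∈ range m, twoPowDiv i

lemma twoPowDiv_pos (i : ℕ) : 0 < twoPowDiv i := by
  unfold twoPowDiv; positivity

lemma twoPowDivSum_pos {m : ℕ} (hm : 0 < m) : 0 < twoPowDivSum m :=
  sum_pos (fun i _ => twoPowDiv_pos i) ⟨0, mem_range.mpr hm⟩

lemma f_eq_mul_twoPowDivSum (n : ℕ) : f n = (n + 1) / 2 ^ (n + 1) * twoPowDivSum (n + 1) := by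
  induction n with
  | zero => simp [f, twoPowDivSum, twoPowDiv]
  | succ n ih =>
    rw [f_succ, ih, twoPowDivSum, twoPowDivSum, sum_range_succ _ (n + 1), twoPowDiv]
    have : ((n : ℚ) + 1) ≠ 0 := by positivity
    push_cast
    field_simp
    ring

lemma padicValRat_two_pow (m : ℕ) : padicValRat 2 ((2 : ℚ) ^ m) = m := by
  rw [padicValRat.pow, ← Nat.cast_ofNat (R := ℚ), padicValRat.self one_lt_two, mul_one]

lemma padicValRat_f (n : ℕ) :
    padicValRat 2 (f n) =
      padicValNat 2 (n + 1) + padicValRat 2 (twoPowDivSum (n + 1)) - (n + 1 : ℕ) := by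
  have hS := (twoPowDivSum_pos n.succ_pos).ne'
  have hn : (n : ℚ) + 1 ≠ 0 := by positivity
  rw [f_eq_mul_twoPowDivSum, div_mul_eq_mul_div,
    padicValRat.div (mul_ne_zero hn hS) (by positivity), padicValRat.mul hn hS,
    ← padicValRat.of_nat]
  push_cast
  rw [padicValRat_two_pow]
  push_cast; ring

lemma padicValRat_twoPowDiv (i : ℕ) :
    padicValRat 2 (twoPowDiv i) = (i + 1 : ℕ) - padicValNat 2 (i + 1) := by
  have hi : ((i + 1 : ℕ) : ℚ) ≠ 0 := by positivity
  rw [twoPowDiv, padicValRat.div (by positivity) (by exact_mod_cast hi), padicValRat_two_pow,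
    ← padicValRat.of_nat]
  push_cast; ring

lemma cast_choose_prime_pow_sub_one {p n i : ℕ} (hp : p.Prime) (hi : i < p ^ n) :
    ((p ^ n - 1).choose i : ZMod p) = (-1) ^ i := by
  obtain ⟨N, hN⟩ : ∃ N, p ^ n = N + 1 := Nat.exists_eq_add_one.mpr (by omega)
  rw [hN, Nat.add_sub_cancel]
  induction i with
  | zero => simp
  | succ i ih =>
    have hdvd : ((N + 1).choose (i + 1) : ZMod p) = 0 := by
      rw [ZMod.natCast_eq_zero_iff, ← hN]
      exact hp.dvd_choose_pow (by omega) (by omega)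
    rw [Nat.choose_succ_succ, Nat.cast_add, ih (by omega)] at hdvd
    rw [pow_succ]
    linear_combination hdvd

lemma not_dvd_choose_prime_pow_sub_one {p n i : ℕ} (hp : p.Prime) (hi : i < p ^ n) :
    ¬ p ∣ (p ^ n - 1).choose i := by
  have := Fact.mk hp
  rw [← ZMod.natCast_eq_zero_iff, cast_choose_prime_pow_sub_one hp hi]
  exact pow_ne_zero _ (neg_ne_zero.mpr one_ne_zero)

lemma f_two_mul_add_one (m : ℕ) :
    f (2 * m + 1) = ∑ i ∈ range (m + 1), 2 / ((2 * m + 1).choose i : ℚ) := by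
  have hsymm : ∑ i ∈ range (m + 1), ((2 * m + 1).choose (m + 1 + i) : ℚ)⁻¹ =
      ∑ i ∈ range (m + 1), ((2 * m + 1).choose i : ℚ)⁻¹ := by
    rw [← sum_range_reflect]
    refine sum_congr rfl fun i hi => ?_
    have := mem_range.mp hi
    rw [← Nat.choose_symm (by omega)]
    congr 3
    omega
  rw [f, show 2 * m + 1 + 1 = m + 1 + (m + 1) by ring, sum_range_add, hsymm]
  simp only [div_eq_mul_inv, ← mul_sum]
  ring

lemma one_le_padicValRat_f_two_pow_sub_one {e : ℕ} (he : 1 ≤ e) :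
    1 ≤ padicValRat 2 (f (2 ^ e - 1)) := by
  obtain ⟨m, hm⟩ : ∃ m, 2 ^ e - 1 = 2 * m + 1 := by
    have h2e : 2 ^ e = 2 * 2 ^ (e - 1) := by rw [← pow_succ']; congr 1; omega
    exact ⟨2 ^ (e - 1) - 1, by have := Nat.one_le_two_pow (n := e - 1); omega⟩
  have hchoose : ∀ i < m + 1, (2 * m + 1).choose i ≠ 0 := fun i hi =>
    (Nat.choose_pos (by omega)).ne'
  have hterm : ∀ i < m + 1, padicValRat 2 (2 / ((2 * m + 1).choose i : ℚ)) = 1 := by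
    intro i hi
    rw [padicValRat.div two_ne_zero (by exact_mod_cast hchoose i hi), padicValRat.of_nat, ← hm,
      padicValNat.eq_zero_of_not_dvd (not_dvd_choose_prime_pow_sub_one Nat.prime_two (by omega))]
    simpa using padicValRat.self (p := 2) one_lt_two
  rw [hm, f_two_mul_add_one]
  refine padicValRat.sum_pos_of_pos (fun i hi => by rw [hterm i hi]; exact one_pos) ?_
  refine (sum_pos (fun i hi => ?_) ⟨0, by simp⟩).ne'
  have := Nat.pos_of_ne_zero (hchoose i (mem_range.mp hi))
  positivity

lemma padicValNat_pow_sub {p e j : ℕ} [hp : Fact p.Prime] (hj : 0 < j) (hje : j < p ^ e) :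
    padicValNat p (p ^ e - j) = padicValNat p j := by
  have hlt : padicValNat p j < e :=
    (Nat.pow_lt_pow_iff_right hp.out.one_lt).mp
      ((Nat.le_of_dvd hj pow_padicValNat_dvd).trans_lt hje)
  have hcast : ((p ^ e - j : ℕ) : ℚ) = -(j : ℚ) + (p : ℚ) ^ e := by
    push_cast [Nat.cast_sub hje.le]; ring
  have hj0 : (j : ℚ) ≠ 0 := by exact_mod_cast hj.ne'
  have hval := padicValRat.add_eq_of_lt (p := p) (q := -(j : ℚ)) (r := (p : ℚ) ^ e)
    (by rw [← hcast]; exact_mod_cast (Nat.sub_pos_of_lt hje).ne') (neg_ne_zero.mpr hj0)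
    (pow_ne_zero _ (by exact_mod_cast hp.out.ne_zero))
    (by rw [padicValRat.neg, padicValRat.of_nat (n := j), padicValRat.pow,
          padicValRat.self hp.out.one_lt, mul_one]
        exact_mod_cast hlt)
  rw [← hcast, padicValRat.neg, padicValRat.of_nat, padicValRat.of_nat] at hval
  exact_mod_cast hval

lemma lt_padicValRat_twoPowDivSum_two_pow {e : ℕ} (he : 1 ≤ e) :
    ((2 ^ e : ℕ) : ℤ) - e < padicValRat 2 (twoPowDivSum (2 ^ e)) := by
  have h := one_le_padicValRat_f_two_pow_sub_one he
  rw [padicValRat_f, Nat.sub_add_cancel Nat.one_le_two_pow, padicValNat.prime_pow] at h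
  omega

lemma padicValRat_sum_Ico_twoPowDiv {k e : ℕ} (hk : 1 ≤ k) (hkN : k ≤ 2 ^ e)
    (he : ∀ j, 0 < j → j < k → j + padicValNat 2 j < e) :
    padicValRat 2 (∑ i ∈ Ico (2 ^ e - k) (2 ^ e), twoPowDiv i) = ((2 ^ e : ℕ) : ℤ) - e := by
  have hN := Nat.one_le_two_pow (n := e)
  have htop : padicValRat 2 (twoPowDiv (2 ^ e - 1)) = ((2 ^ e : ℕ) : ℤ) - e := by
    rw [padicValRat_twoPowDiv, Nat.sub_add_cancel hN, padicValNat.prime_pow]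
  have hrest : ∀ i ∈ Ico (2 ^ e - k) (2 ^ e - 1),
      padicValRat 2 (twoPowDiv (2 ^ e - 1)) < padicValRat 2 (twoPowDiv i) := by
    intro i hi
    rw [mem_Ico] at hi
    have hj := he (2 ^ e - (i + 1)) (by omega) (by omega)
    have hv : padicValNat 2 (i + 1) = padicValNat 2 (2 ^ e - (i + 1)) := by
      rw [← padicValNat_pow_sub (by omega) (by omega : 2 ^ e - (i + 1) < 2 ^ e),
        Nat.sub_sub_self (by omega)]
    rw [htop, padicValRat_twoPowDiv, hv]
    omega
  rw [← Nat.sub_add_cancel hN, sum_Ico_succ_top (by omega), Nat.sub_add_cancel hN, add_comm]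
  rcases (Ico (2 ^ e - k) (2 ^ e - 1)).eq_empty_or_nonempty with hempty | hne
  · rw [hempty, sum_empty, add_zero, htop]
  · have hpos := sum_pos (fun i _ => twoPowDiv_pos i) hne
    rw [padicValRat.add_eq_of_lt (add_pos (twoPowDiv_pos _) hpos).ne' (twoPowDiv_pos _).ne'
      hpos.ne' (padicValRat.lt_sum_of_lt hne hrest twoPowDiv_pos), htop]

lemma padicValRat_twoPowDivSum_two_pow_sub {k e : ℕ} (he1 : 1 ≤ e) (hk : 1 ≤ k)
    (hkN : k < 2 ^ e) (he : ∀ j, 0 < j → j < k → j + padicValNat 2 j < e) :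
    padicValRat 2 (twoPowDivSum (2 ^ e - k)) = ((2 ^ e : ℕ) : ℤ) - e := by
  set tail := ∑ i ∈ Ico (2 ^ e - k) (2 ^ e), twoPowDiv i with htail_def
  have htail : 0 < tail := sum_pos (fun i _ => twoPowDiv_pos i) (nonempty_Ico.mpr (by omega))
  have hsplit : twoPowDivSum (2 ^ e - k) = -tail + twoPowDivSum (2 ^ e) := by
    rw [twoPowDivSum, twoPowDivSum, ← sum_range_add_sum_Ico twoPowDiv (Nat.sub_le (2 ^ e) k),
      ← htail_def]
    ring
  have hval : padicValRat 2 (-tail) < padicValRat 2 (twoPowDivSum (2 ^ e)) := by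
    rw [padicValRat.neg, padicValRat_sum_Ico_twoPowDiv hk hkN.le he]
    exact lt_padicValRat_twoPowDivSum_two_pow he1
  rw [hsplit, padicValRat.add_eq_of_lt (hsplit ▸ (twoPowDivSum_pos (by omega)).ne')
    (neg_ne_zero.mpr htail.ne') (twoPowDivSum_pos (by positivity)).ne' hval, padicValRat.neg,
    padicValRat_sum_Ico_twoPowDiv hk hkN.le he]

theorem stmt_17 (k : ℕ) (hk : 1 ≤ k) (e : ℕ) (he1 : 1 < e)
    (he2 : ∀ j : ℕ, 0 < j → j < k → j + padicValNat 2 j < e) :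
    padicValRat 2 (f (2 ^ e - k - 1)) =
      (k : ℤ) + padicValNat 2 k - e := by
  have hke : k ≤ e := by
    rcases Nat.lt_or_ge 1 k with h | h
    · have := he2 (k - 1) (by omega) (by omega); omega
    · omega
  have hkN : k < 2 ^ e := hke.trans_lt Nat.lt_two_pow_self
  rw [padicValRat_f, show 2 ^ e - k - 1 + 1 = 2 ^ e - k by omega, padicValNat_pow_sub hk hkN,
    padicValRat_twoPowDivSum_two_pow_sub he1.le hk hkN he2, Nat.cast_sub hkN.le]
  ring
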